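/- arXiv:2107.04107 — 3 statements merged into one kernel-verified Lean document; each statement's English description precedes it below -/
import Mathlib

section
/- Let V be the ℂ-vector space of homogeneous polynomials of degree 6 in ℂ[s₀, s₁, s₂, s₃] that lie in the ideal (sᵢ, sⱼ)² for every pair 0 ≤ i < j ≤ 3. Then V has dimension 14, and a basis of V is given by the four monomials s₁²s₂²s₃², s₀²s₂²s₃², s₀²s₁²s₃², s₀²s₁²s₂² together with the ten monomials s₀s₁s₂s₃·m, where m ranges over the ten monomials of degree 2 in s₀, s₁, s₂, s₃. -/
open MvPolynomial

/-- The space of sextic forms in 4 variables lying in `(sᵢ, sⱼ)²` for all pairs `i < j`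
(i.e. sextic surfaces double along the six edges of the coordinate tetrahedron). -/
noncomputable def enriquesSexticSpace : Submodule ℂ (MvPolynomial (Fin 4) ℂ) :=
  (homogeneousSubmodule (Fin 4) ℂ 6) ⊓
    ⨅ (i : Fin 4) (j : Fin 4) (_ : i < j),
      (Submodule.restrictScalars ℂ
        ((Ideal.span {(X i : MvPolynomial (Fin 4) ℂ), X j}) ^ 2))

/-- The 14 monomials: for each `i`, the product `∏_{j ≠ i} sⱼ²`, and for each pair
`i ≤ j`, the monomial `s₀s₁s₂s₃ · sᵢsⱼ`. -/
noncomputable def enriquesSexticBasisFamily :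
    (Fin 4 ⊕ {p : Fin 4 × Fin 4 // p.1 ≤ p.2}) → MvPolynomial (Fin 4) ℂ :=
  Sum.elim
    (fun i => ∏ j ∈ Finset.univ.filter (· ≠ i), (X j) ^ 2)
    (fun p => (X 0 * X 1 * X 2 * X 3) * (X p.1.1 * X p.1.2))

/-!
Both defining conditions are conditions on exponent vectors: `(sᵢ, sⱼ)²` is the monomial ideal of
the exponents with `aᵢ + aⱼ ≥ 2`, so the space is spanned by the monomials whose exponents have
degree 6 and satisfy the six pair inequalities. Such an exponent either has a zero entry, and then
the other three entries are at least 2 and sum to 6, hence all equal 2; or all its entries are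
positive, and removing `(1,1,1,1)` leaves an exponent of degree 2, i.e. `e_a + e_b`.
-/

theorem Finsupp.single_add_single_le_iff {σ : Type*} {i j : σ} (hij : i ≠ j) {m : σ →₀ ℕ} :
    Finsupp.single i 1 + Finsupp.single j 1 ≤ m ↔ 1 ≤ m i ∧ 1 ≤ m j := by
  classical
  refine ⟨fun h => ⟨by simpa [hij.symm] using h i, by simpa [hij] using h j⟩, fun h x => ?_⟩
  simp only [Finsupp.coe_add, Pi.add_apply, Finsupp.single_apply]
  split_ifs <;> subst_vars <;> first | omega | exact absurd rfl hij

theorem mem_span_X_pair_sq_iff {σ R : Type*} [CommSemiring R] {i j : σ} (hij : i ≠ j)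
    {p : MvPolynomial σ R} :
    p ∈ Ideal.span {X i, X j} ^ 2 ↔ ∀ m ∈ p.support, 2 ≤ m i + m j := by
  have hXX (a b : σ) : (X a * X b : MvPolynomial σ R) =
      monomial (Finsupp.single a 1 + Finsupp.single b 1) 1 := by
    rw [X, X, monomial_mul, one_mul]
  have hsq : Ideal.span {X i, X j} ^ 2 = Ideal.span ((monomial · (1 : R)) ''
      {Finsupp.single i 1 + Finsupp.single i 1, Finsupp.single i 1 + Finsupp.single j 1,
        Finsupp.single j 1 + Finsupp.single j 1}) := by
    rw [sq, Ideal.span_pair_mul_span_pair, mul_comm (X j) (X i), Set.insert_idem]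
    simp only [Set.image_insert_eq, Set.image_singleton, hXX]
  rw [hsq, mem_ideal_span_monomial_image]
  refine forall₂_congr fun m _ => ?_
  simp only [Set.mem_insert_iff, Set.mem_singleton_iff, exists_eq_or_imp, exists_eq_left,
    ← Finsupp.single_add, Finsupp.single_le_iff, Finsupp.single_add_single_le_iff hij]
  omega

theorem enriquesSexticSpace_eq_restrictSupport :
    enriquesSexticSpace = restrictSupport ℂ
      {m | m.degree = 6 ∧ ∀ i j : Fin 4, i < j → 2 ≤ m i + m j} := by
  ext p
  simp only [enriquesSexticSpace, Submodule.mem_inf, Submodule.mem_iInf,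
    Submodule.restrictScalars_mem, homogeneousSubmodule_eq_finsupp_supported]
  rw [mem_restrictSupport_iff, ← restrictSupport, mem_restrictSupport_iff]
  simp only [Set.subset_def, Finset.mem_coe, Set.mem_ofPred_eq]
  have hedge (i j : Fin 4) (hij : i < j) := mem_span_X_pair_sq_iff (R := ℂ) (p := p) hij.ne
  constructor
  · rintro ⟨hdeg, hsq⟩ m hm
    exact ⟨hdeg m hm, fun i j hij => (hedge i j hij).1 (hsq i j hij) m hm⟩
  · intro h
    exact ⟨fun m hm => (h m hm).1,
      fun i j hij => (hedge i j hij).2 fun m hm => (h m hm).2 i j hij⟩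

noncomputable def enriquesSexticExponent :
    Fin 4 ⊕ {p : Fin 4 × Fin 4 // p.1 ≤ p.2} → (Fin 4 →₀ ℕ) :=
  Sum.elim (fun i => ∑ j ∈ Finset.univ.filter (· ≠ i), Finsupp.single j 2)
    (fun p => ∑ j, Finsupp.single j 1 + (Finsupp.single p.1.1 1 + Finsupp.single p.1.2 1))

theorem enriquesSexticBasisFamily_eq (k : Fin 4 ⊕ {p : Fin 4 × Fin 4 // p.1 ≤ p.2}) :
    enriquesSexticBasisFamily k = monomial (enriquesSexticExponent k) 1 := by
  rcases k with i | p
  · simp [enriquesSexticBasisFamily, enriquesSexticExponent, monomial_sum_one, X_pow_eq_monomial]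
  · simp [enriquesSexticBasisFamily, enriquesSexticExponent, X, monomial_mul,
      Fin.sum_univ_four]

theorem enriquesSexticExponent_inl_apply (i x : Fin 4) :
    enriquesSexticExponent (.inl i) x = if x = i then 0 else 2 := by
  simp only [enriquesSexticExponent, Sum.elim_inl, Finsupp.finsetSum_apply, Finsupp.single_apply,
    Finset.sum_ite_eq', Finset.mem_filter]
  simp [ite_not]

theorem enriquesSexticExponent_inr_apply (p : {p : Fin 4 × Fin 4 // p.1 ≤ p.2}) (x : Fin 4) :
    enriquesSexticExponent (.inr p) x =
      1 + ((if p.1.1 = x then 1 else 0) + if p.1.2 = x then 1 else 0) := by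
  simp [enriquesSexticExponent, Finsupp.single_apply]

theorem enriquesSexticExponent_injective : Function.Injective enriquesSexticExponent := by
  refine Function.Injective.of_comp (f := DFunLike.coe) ?_
  have hcoe : DFunLike.coe ∘ enriquesSexticExponent = Sum.elim (fun i x => if x = i then 0 else 2)
      (fun p x => 1 + ((if p.1.1 = x then 1 else 0) + if p.1.2 = x then 1 else 0)) := by
    ext (i | p) x
    · exact enriquesSexticExponent_inl_apply i x
    · exact enriquesSexticExponent_inr_apply p x
  rw [hcoe]
  decide

theorem degree_enriquesSexticExponent (k : Fin 4 ⊕ {p : Fin 4 × Fin 4 // p.1 ≤ p.2}) :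
    (enriquesSexticExponent k).degree = 6 := by
  rcases k with i | p
  · simp [enriquesSexticExponent, map_sum, Finsupp.degree_single, Finset.filter_ne']
  · simp [enriquesSexticExponent, map_sum, Finsupp.degree_single]

theorem two_le_enriquesSexticExponent_add {i j : Fin 4} (hij : i ≠ j)
    (k : Fin 4 ⊕ {p : Fin 4 × Fin 4 // p.1 ≤ p.2}) :
    2 ≤ enriquesSexticExponent k i + enriquesSexticExponent k j := by
  rcases k with l | p
  · rw [enriquesSexticExponent_inl_apply, enriquesSexticExponent_inl_apply]
    split_ifs <;> omega
  · rw [enriquesSexticExponent_inr_apply, enriquesSexticExponent_inr_apply]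
    omega

theorem enriquesSexticExponent_inl_eq_of_eq_zero {m : Fin 4 →₀ ℕ} {i : Fin 4} (hi : m i = 0)
    (hdeg : m.degree = 6) (htwo : ∀ j ≠ i, 2 ≤ m j) :
    enriquesSexticExponent (.inl i) = m := by
  have hsum : ∑ j ∈ Finset.univ.erase i, 2 = ∑ j ∈ Finset.univ.erase i, m j := by
    rw [Finsupp.degree_eq_sum, ← Finset.add_sum_erase _ _ (Finset.mem_univ i), hi,
      zero_add] at hdeg
    simp [hdeg]
  have heq := (Finset.sum_eq_sum_iff_of_le fun j hj => htwo j (Finset.ne_of_mem_erase hj)).1 hsum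
  ext x
  rw [enriquesSexticExponent_inl_apply]
  split_ifs with hx
  · rw [hx, hi]
  · exact heq x (Finset.mem_erase.2 ⟨hx, Finset.mem_univ x⟩)

theorem exists_enriquesSexticExponent_inr_eq {m : Fin 4 →₀ ℕ} (hm : ∀ i, m i ≠ 0)
    (hdeg : m.degree = 6) : ∃ p, enriquesSexticExponent (.inr p) = m := by
  set u : Fin 4 →₀ ℕ := ∑ j, Finsupp.single j 1
  have hu (x : Fin 4) : u x = 1 := by simp [u, Finsupp.single_apply]
  have hmu : m = u + (m - u) := by
    ext x
    simp only [Finsupp.coe_add, Finsupp.coe_tsub, Pi.add_apply, Pi.sub_apply, hu]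
    have := hm x
    omega
  have hdeg_u : u.degree = 4 := by simp [u, map_sum]
  have hcard : Multiset.card (Finsupp.toMultiset (m - u)) = 2 := by
    have := congrArg Finsupp.degree hmu
    rw [map_add, hdeg_u, hdeg] at this
    rw [Finsupp.card_toMultiset]
    change Finsupp.degree _ = 2
    omega
  obtain ⟨a, b, hab⟩ := Multiset.card_eq_two.1 hcard
  have hsub : m - u = Finsupp.single a 1 + Finsupp.single b 1 := by
    classical
    rw [← Finsupp.toMultiset_toFinsupp (m - u), hab, Multiset.insert_eq_cons,
      ← Multiset.singleton_add, Multiset.toFinsupp_add, Multiset.toFinsupp_singleton,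
      Multiset.toFinsupp_singleton]
  rcases le_total a b with h | h
  · exact ⟨⟨(a, b), h⟩, by rw [hmu, hsub]; rfl⟩
  · exact ⟨⟨(b, a), h⟩, by rw [hmu, hsub, add_comm (Finsupp.single a 1)]; rfl⟩

theorem range_enriquesSexticExponent :
    Set.range enriquesSexticExponent =
      {m | m.degree = 6 ∧ ∀ i j : Fin 4, i < j → 2 ≤ m i + m j} := by
  ext m
  constructor
  · rintro ⟨k, rfl⟩
    exact ⟨degree_enriquesSexticExponent k,
      fun i j hij => two_le_enriquesSexticExponent_add hij.ne k⟩
  · rintro ⟨hdeg, hpair⟩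
    have htwo {i j : Fin 4} (hij : i ≠ j) : 2 ≤ m i + m j := by
      rcases hij.lt_or_gt with h | h
      · exact hpair i j h
      · rw [add_comm]; exact hpair j i h
    by_cases hzero : ∃ i, m i = 0
    · obtain ⟨i, hi⟩ := hzero
      refine ⟨.inl i, enriquesSexticExponent_inl_eq_of_eq_zero hi hdeg fun j hj => ?_⟩
      simpa [hi] using htwo hj.symm
    · push Not at hzero
      obtain ⟨p, hp⟩ := exists_enriquesSexticExponent_inr_eq hzero hdeg
      exact ⟨.inr p, hp⟩

/-- The space of Enriques sextics has dimension 14, with basis the 14 listed monomials. -/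
theorem stmt_2 :
    LinearIndependent ℂ enriquesSexticBasisFamily ∧
    Submodule.span ℂ (Set.range enriquesSexticBasisFamily) = enriquesSexticSpace ∧
    Module.finrank ℂ enriquesSexticSpace = 14 := by
  have hfamily :
      enriquesSexticBasisFamily = basisMonomials (Fin 4) ℂ ∘ enriquesSexticExponent := by
    ext1 k
    rw [Function.comp_apply, coe_basisMonomials, enriquesSexticBasisFamily_eq]
  have hli : LinearIndependent ℂ enriquesSexticBasisFamily := by
    rw [hfamily]
    exact (basisMonomials (Fin 4) ℂ).linearIndependent.comp _ enriquesSexticExponent_injective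
  have hspan : Submodule.span ℂ (Set.range enriquesSexticBasisFamily) = enriquesSexticSpace := by
    rw [enriquesSexticSpace_eq_restrictSupport, ← range_enriquesSexticExponent,
      restrictSupport_eq_span, hfamily, Set.range_comp, coe_basisMonomials]
  refine ⟨hli, hspan, ?_⟩
  rw [← hspan, finrank_span_eq_card hli]
  rfl
end

section
/- Let f₁, f₂, f₃, g₁, g₂, g₃ ∈ ℂ[s₀, s₁, s₂, s₃] be six nonzero linear forms that are pairwise non-proportional. Then the following ten homogeneous polynomials of degree 7 are linearly independent over ℂ: the four polynomials f₁f₂f₃g₁g₂g₃·sᵢ for i = 0, 1, 2, 3; the three polynomials g₁g₂g₃·f₂²f₃², g₁g₂g₃·f₁²f₃², g₁g₂g₃·f₁²f₂²; and the three polynomials f₁f₂f₃·g₂²g₃², f₁f₂f₃·g₁²g₃², f₁f₂f₃·g₁²g₂². -/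
/-!
Linear forms are prime in `ℂ[s₀, s₁, s₂, s₃]`, and two of them divide each other only if they
are proportional. Hence `fₖ` divides nine of the ten septics but not `g₁g₂g₃ ∏_{j≠k} fⱼ²`, so
reducing a vanishing combination modulo `fₖ` kills the coefficient of that septic; likewise for
the `gₖ`. What remains is `f₁f₂f₃g₁g₂g₃ · ∑ aᵢ sᵢ = 0`, forcing all `aᵢ = 0`.
-/

open MvPolynomial

namespace MvPolynomial

variable {σ K : Type*} [Field K]

theorem prime_of_isHomogeneous_one {p : MvPolynomial σ K} (hp : p.IsHomogeneous 1)
    (hp0 : p ≠ 0) : Prime p := by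
  refine (irreducible_of_totalDegree_eq_one (hp.totalDegree hp0) fun x hx => ?_).prime
  obtain ⟨d, hd⟩ := ne_zero_iff.mp hp0
  exact isUnit_iff_ne_zero.mpr fun hx0 => hd (zero_dvd_iff.mp (hx0 ▸ hx d))

theorem exists_eq_C_mul_of_dvd {R : Type*} [CommRing R] [IsDomain R]
    {p q : MvPolynomial σ R} (hp : Irreducible p) (hq : Irreducible q) (hpq : p ∣ q) :
    ∃ c, q = C c * p := by
  obtain ⟨u, rfl⟩ := hp.associated_of_dvd hq hpq
  obtain ⟨c, -, hc⟩ := isUnit_iff_eq_C_of_isReduced.mp u.isUnit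
  exact ⟨c, by rw [hc, mul_comm]⟩

theorem linearIndependent_mul_X {R : Type*} [CommRing R] [IsDomain R]
    {h : MvPolynomial σ R} (h0 : h ≠ 0) :
    LinearIndependent R fun i => h * X i :=
  (linearIndependent_X (R := R) (σ := σ)).map' (LinearMap.mulLeft R h)
    (LinearMap.ker_eq_bot.mpr (mul_right_injective₀ h0))

end MvPolynomial

theorem linearIndependent_sumElim_of_prime_dvd {K R ι κ : Type*} [Field K] [CommRing R]
    [Algebra K R] [Fintype ι] [Fintype κ] [DecidableEq κ] {u : ι → R} {v : κ → R}
    (hu : LinearIndependent K u) (p : κ → R) (hp : ∀ k, Prime (p k))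
    (hpu : ∀ k i, p k ∣ u i) (hpv : ∀ k l, l ≠ k → p k ∣ v l) (hpvk : ∀ k, ¬ p k ∣ v k) :
    LinearIndependent K (Sum.elim u v) := by
  rw [Fintype.linearIndependent_iff] at hu ⊢
  intro w hw
  rw [Fintype.sum_sum_type] at hw
  have hv : ∀ k, w (.inr k) = 0 := by
    intro k
    by_contra hwk
    have hsplit : w (.inr k) • v k = -(∑ i, w (.inl i) • u i +
        ∑ l ∈ Finset.univ.erase k, w (.inr l) • v l) := by
      rw [← Finset.add_sum_erase _ _ (Finset.mem_univ k)] at hw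
      simp only [Sum.elim_inl, Sum.elim_inr] at hw
      linear_combination hw
    have hdvd : p k ∣ algebraMap K R (w (.inr k)) * v k := by
      rw [← Algebra.smul_def, hsplit, dvd_neg]
      refine dvd_add (Finset.dvd_sum fun i _ => ?_) (Finset.dvd_sum fun l hl => ?_)
      · exact dvd_smul_of_dvd _ (hpu k i)
      · exact dvd_smul_of_dvd _ (hpv k l (Finset.ne_of_mem_erase hl))
    rcases (hp k).dvd_or_dvd hdvd with hunit | hvk
    · exact (hp k).not_isUnit (isUnit_of_dvd_unit hunit ((Ne.isUnit hwk).map _))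
    · exact hpvk k hvk
  have hu0 := hu (w ∘ .inl) (by simpa [hv] using hw)
  rintro (i | k)
  · exact hu0 i
  · exact hv k

section ProdFilterNe

variable {M ι : Type*} [CommMonoidWithZero M] [Fintype ι] [DecidableEq ι]

theorem dvd_prod_filter_ne_sq (e : ι → M) {k l : ι} (hkl : k ≠ l) :
    e k ∣ ∏ j ∈ Finset.univ.filter (· ≠ l), e j ^ 2 :=
  (dvd_pow_self _ two_ne_zero).trans (Finset.dvd_prod_of_mem _ (by simpa using hkl))

theorem Prime.not_dvd_prod_mul_prod_filter_ne_sq {e e' : ι → M} {k : ι} (hp : Prime (e k))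
    (he' : ∀ j, ¬ e k ∣ e' j) (he : ∀ j, j ≠ k → ¬ e k ∣ e j) :
    ¬ e k ∣ (∏ j, e' j) * ∏ j ∈ Finset.univ.filter (· ≠ k), e j ^ 2 := by
  refine hp.not_dvd_mul (hp.not_dvd_finsetProd fun j _ => he' j)
    (hp.not_dvd_finsetProd fun j hj => ?_)
  exact fun hdvd => he j (Finset.mem_filter.mp hj).2 (hp.dvd_of_dvd_pow hdvd)

end ProdFilterNe

/-- Given six nonzero pairwise non-proportional linear forms `f₁,f₂,f₃,g₁,g₂,g₃` in
`ℂ[s₀,s₁,s₂,s₃]`, the ten septic forms `f₁f₂f₃g₁g₂g₃·sᵢ` (i = 0,…,3),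
`g₁g₂g₃·∏_{j≠k} fⱼ²` (k = 1,2,3) and `f₁f₂f₃·∏_{j≠k} gⱼ²` (k = 1,2,3) are
linearly independent over ℂ. -/
theorem stmt_6 (f g : Fin 3 → MvPolynomial (Fin 4) ℂ)
    (hf : ∀ i, (f i).IsHomogeneous 1) (hg : ∀ i, (g i).IsHomogeneous 1)
    (hf0 : ∀ i, f i ≠ 0) (hg0 : ∀ i, g i ≠ 0)
    (hprop : ∀ a b : Fin 3 ⊕ Fin 3, a ≠ b →
      ∀ c : ℂ, Sum.elim f g a ≠ C c * Sum.elim f g b) :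
    LinearIndependent ℂ
      (Sum.elim
        (fun i : Fin 4 => (f 0 * f 1 * f 2) * (g 0 * g 1 * g 2) * X i)
        (Sum.elim
          (fun k : Fin 3 => (g 0 * g 1 * g 2) * ∏ j ∈ Finset.univ.filter (· ≠ k), (f j) ^ 2)
          (fun k : Fin 3 => (f 0 * f 1 * f 2) * ∏ j ∈ Finset.univ.filter (· ≠ k), (g j) ^ 2))) := by
  have hprime : ∀ a, Prime (Sum.elim f g a) := by
    rintro (k | k)
    · exact prime_of_isHomogeneous_one (hf k) (hf0 k)
    · exact prime_of_isHomogeneous_one (hg k) (hg0 k)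
  have hndvd : ∀ a b, a ≠ b → ¬ Sum.elim f g a ∣ Sum.elim f g b := fun a b hab hdvd =>
    have ⟨c, hc⟩ := exists_eq_C_mul_of_dvd (hprime a).irreducible (hprime b).irreducible hdvd
    hprop b a hab.symm c hc
  rw [← Fin.prod_univ_three f, ← Fin.prod_univ_three g]
  refine linearIndependent_sumElim_of_prime_dvd
    (linearIndependent_mul_X (mul_ne_zero (Finset.prod_ne_zero_iff.mpr fun k _ => hf0 k)
      (Finset.prod_ne_zero_iff.mpr fun k _ => hg0 k)))
    (Sum.elim f g) hprime ?_ ?_ ?_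
  · rintro (k | k) i
    · exact ((Finset.dvd_prod_of_mem f (Finset.mem_univ k)).mul_right _).mul_right _
    · exact ((Finset.dvd_prod_of_mem g (Finset.mem_univ k)).mul_left _).mul_right _
  · rintro (k | k) (l | l) hlk
    · exact (dvd_prod_filter_ne_sq f (by simpa using hlk.symm)).mul_left _
    · exact (Finset.dvd_prod_of_mem f (Finset.mem_univ k)).mul_right _
    · exact (Finset.dvd_prod_of_mem g (Finset.mem_univ k)).mul_right _
    · exact (dvd_prod_filter_ne_sq g (by simpa using hlk.symm)).mul_left _
  · rintro (k | k)
    · exact Prime.not_dvd_prod_mul_prod_filter_ne_sq (e := f) (e' := g) (hprime (.inl k))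
        (fun j => hndvd (.inl k) (.inr j) Sum.inl_ne_inr)
        (fun j hj => hndvd (.inl k) (.inl j) (by simpa using hj.symm))
    · exact Prime.not_dvd_prod_mul_prod_filter_ne_sq (e := g) (e' := f) (hprime (.inr k))
        (fun j => hndvd (.inr k) (.inl j) Sum.inr_ne_inl)
        (fun j hj => hndvd (.inr k) (.inr j) (by simpa using hj.symm))
end

section
/- Let p₀, p₁, p₂ ∈ ℂ[t, u] be homogeneous polynomials of degree 3, not all zero, satisfying p₀·p₂ = p₁². Then there exists a nonzero linear form ℓ ∈ ℂ[t, u] dividing each of p₀, p₁ and p₂. -/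
/-!
If `p₀ ≠ 0` shared no prime factor with `p₂`, then `p₀ p₂ = p₁²` would make `p₀` a unit times a
square, which is impossible for a form of odd degree. So some prime `π` divides `p₀` and `p₂`,
hence also `p₁`. A binary form over `ℂ` is a product of linear forms (dehomogenize, factor,
homogenize back), so the prime `π` is associated to one of the linear factors of `p₀`.
-/

theorem exists_prime_dvd_of_mul_eq_pow {R : Type*} [CommMonoidWithZero R]
    [UniqueFactorizationMonoid R] {a b c : R} {k : ℕ} (ha : a ≠ 0)
    (hpow : ∀ d : R, ¬Associated (d ^ k) a) (h : a * b = c ^ k) :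
    ∃ π, Prime π ∧ π ∣ a ∧ π ∣ b ∧ π ∣ c := by
  let _ := UniqueFactorizationMonoid.toGCDMonoid R
  obtain ⟨π, hπa, hπb, hπ⟩ : ∃ π, π ∣ a ∧ π ∣ b ∧ Prime π := by
    by_contra! hrel
    have hab : IsRelPrime a b :=
      (UniqueFactorizationMonoid.isRelPrime_iff_no_prime_factors ha).mpr hrel
    obtain ⟨d, hd⟩ := exists_associated_pow_of_mul_eq_pow (gcd_isUnit_iff_isRelPrime.mpr hab) h
    exact hpow d hd
  exact ⟨π, hπ, hπa, hπb, hπ.dvd_of_dvd_pow (h ▸ dvd_mul_of_dvd_left hπa b)⟩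

namespace MvPolynomial

section Domain

variable {σ R : Type*} [CommRing R] [IsDomain R]

theorem totalDegree_pow_of_isDomain (p : MvPolynomial σ R) (k : ℕ) :
    (p ^ k).totalDegree = k * p.totalDegree := by
  rcases eq_or_ne p 0 with rfl | hp
  · cases k <;> simp
  induction k with
  | zero => simp
  | succ k ih => rw [pow_succ, totalDegree_mul_of_isDomain (pow_ne_zero k hp) hp, ih]; ring

theorem IsHomogeneous.not_associated_pow {q : MvPolynomial σ R} {n k : ℕ}
    (hq : q.IsHomogeneous n) (hq0 : q ≠ 0) (hkn : ¬k ∣ n) (d : MvPolynomial σ R) :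
    ¬Associated (d ^ k) q := by
  rintro ⟨u, rfl⟩
  have hu : (u : MvPolynomial σ R).totalDegree = 0 :=
    (isUnit_iff_totalDegree_of_isReduced.mp u.isUnit).2
  have hdeg := hq.totalDegree hq0
  rw [totalDegree_mul_of_isDomain (left_ne_zero_of_mul hq0) u.ne_zero, hu,
    totalDegree_pow_of_isDomain, add_zero] at hdeg
  exact hkn ⟨_, hdeg.symm⟩

end Domain

theorem isUnit_of_totalDegree_eq_zero {σ K : Type*} [Field K] {p : MvPolynomial σ K} (hp : p ≠ 0)
    (h : p.totalDegree = 0) : IsUnit p := by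
  refine isUnit_iff_totalDegree_of_isReduced.mpr ⟨isUnit_iff_ne_zero.mpr fun h0 => hp ?_, h⟩
  rw [totalDegree_eq_zero_iff_eq_C.mp h, h0, map_zero]

theorem IsHomogeneous.natDegree_aeval_X_one_le {R : Type*} [CommSemiring R]
    {q : MvPolynomial (Fin 2) R} {n : ℕ} (hq : q.IsHomogeneous n) :
    (MvPolynomial.aeval ![(Polynomial.X : Polynomial R), 1] q).natDegree ≤ n := by
  rw [q.as_sum, map_sum]
  refine Polynomial.natDegree_sum_le_of_forall_le _ _ fun m hm => ?_
  have hmn : m 0 + m 1 = n := by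
    simpa [Finsupp.weight_apply, Finsupp.sum_fintype, Fin.sum_univ_two] using
      hq (mem_support_iff.mp hm)
  rw [aeval_monomial]
  simp only [Finsupp.prod_fintype _ _ (fun i => pow_zero _), Fin.prod_univ_two,
    Matrix.cons_val_zero, Matrix.cons_val_one, one_pow, mul_one, ← Polynomial.C_eq_algebraMap]
  exact (Polynomial.natDegree_C_mul_X_pow_le _ _).trans (by omega)

section IsAlgClosed

variable {K : Type*} [Field K] [IsAlgClosed K]

theorem IsHomogeneous.exists_linear_mul {q : MvPolynomial (Fin 2) K} {n : ℕ}
    (hq : q.IsHomogeneous (n + 1)) :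
    ∃ ℓ q' : MvPolynomial (Fin 2) K, ℓ.IsHomogeneous 1 ∧ ℓ ≠ 0 ∧ q'.IsHomogeneous n ∧
      q = ℓ * q' := by
  set f := MvPolynomial.aeval ![(Polynomial.X : Polynomial K), 1] q
  have hqf : f.homogenize (n + 1) = q := Polynomial.homogenize_eq_of_isHomogeneous hq rfl
  have hfdeg : f.natDegree ≤ n + 1 := hq.natDegree_aeval_X_one_le
  -- `f = q(x, 1)`: if its degree drops then `X 1 ∣ q`, else a root `r` of `f` gives `X 0 - r X 1`.
  rcases hfdeg.lt_or_eq with hlt | hdeg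
  · refine ⟨X 1, f.homogenize n, isHomogeneous_X _ _, X_ne_zero _,
      Polynomial.isHomogeneous_homogenize _, ?_⟩
    have := Polynomial.homogenize_mul f 1 (n := 1) (Nat.lt_succ_iff.mp hlt) (by simp)
    rw [mul_one, Polynomial.homogenize_one, pow_one] at this
    rw [← hqf, this, mul_comm]
  · have hf0 : f ≠ 0 := by intro h; rw [h, Polynomial.natDegree_zero] at hdeg; omega
    obtain ⟨r, hr⟩ := IsAlgClosed.exists_root f <| by
      rw [Polynomial.degree_eq_natDegree hf0, hdeg]; exact_mod_cast n.succ_ne_zero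
    obtain ⟨g, hg⟩ := Polynomial.dvd_iff_isRoot.mpr hr
    have hg0 : g ≠ 0 := by rintro rfl; rw [mul_zero] at hg; exact hf0 hg
    have hgdeg : g.natDegree = n := by
      rw [hg, Polynomial.natDegree_mul (Polynomial.X_sub_C_ne_zero r) hg0,
        Polynomial.natDegree_X_sub_C] at hdeg
      omega
    refine ⟨(Polynomial.X - Polynomial.C r).homogenize 1, g.homogenize n,
      Polynomial.isHomogeneous_homogenize _, ?_, Polynomial.isHomogeneous_homogenize _, ?_⟩
    · rw [Ne, Polynomial.homogenize_eq_zero_iff (Polynomial.natDegree_X_sub_C r).le]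
      exact Polynomial.X_sub_C_ne_zero r
    · rw [← hqf, hg, add_comm n 1,
        Polynomial.homogenize_mul _ _ (Polynomial.natDegree_X_sub_C r).le hgdeg.le]

theorem IsHomogeneous.exists_linear_associated_of_prime_dvd {q : MvPolynomial (Fin 2) K}
    {n : ℕ} (hq : q.IsHomogeneous n) (hq0 : q ≠ 0) {π : MvPolynomial (Fin 2) K}
    (hπ : Prime π) (hπq : π ∣ q) : ∃ ℓ, ℓ.IsHomogeneous 1 ∧ Associated ℓ π := by
  induction n generalizing q with
  | zero =>
    have hunit := isUnit_of_totalDegree_eq_zero hq0 (hq.totalDegree hq0)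
    exact absurd (isUnit_of_dvd_unit hπq hunit) hπ.not_isUnit
  | succ n ih =>
    obtain ⟨ℓ, q', hℓ, hℓ0, hq', rfl⟩ := hq.exists_linear_mul
    rcases hπ.dvd_or_dvd hπq with hπℓ | hπq'
    · have hℓirr : Irreducible ℓ := irreducible_of_totalDegree_eq_one (hℓ.totalDegree hℓ0)
        fun x hx => isUnit_iff_ne_zero.mpr fun hx0 => hℓ0 (by ext i; simpa [hx0] using hx i)
      exact ⟨ℓ, hℓ, (hπ.irreducible.associated_of_dvd hℓirr hπℓ).symm⟩
    · exact ih hq' (right_ne_zero_of_mul hq0) hπq'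

theorem IsHomogeneous.exists_linear_dvd_of_mul_eq_sq {q r s : MvPolynomial (Fin 2) K} {n : ℕ}
    (hq : q.IsHomogeneous n) (hn : Odd n) (hq0 : q ≠ 0) (h : q * r = s ^ 2) :
    ∃ ℓ : MvPolynomial (Fin 2) K, ℓ ≠ 0 ∧ ℓ.IsHomogeneous 1 ∧ ℓ ∣ q ∧ ℓ ∣ r ∧ ℓ ∣ s := by
  obtain ⟨π, hπ, hπq, hπr, hπs⟩ := exists_prime_dvd_of_mul_eq_pow hq0
    (hq.not_associated_pow hq0 (Nat.two_dvd_ne_zero.mpr (Nat.odd_iff.mp hn))) h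
  obtain ⟨ℓ, hℓ, hℓπ⟩ := hq.exists_linear_associated_of_prime_dvd hq0 hπ hπq
  exact ⟨ℓ, hℓπ.ne_zero_iff.mpr hπ.ne_zero, hℓ, hℓπ.dvd.trans hπq, hℓπ.dvd.trans hπr,
    hℓπ.dvd.trans hπs⟩

end IsAlgClosed

end MvPolynomial

/-- If `p₀, p₁, p₂` are binary cubic forms in `ℂ[t,u]`, not all zero, with
`p₀·p₂ = p₁²`, then some nonzero linear form divides all three. -/
theorem stmt_12 (p : Fin 3 → MvPolynomial (Fin 2) ℂ)
    (hp : ∀ i, (p i).IsHomogeneous 3)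
    (hne : ¬ ∀ i, p i = 0)
    (heq : p 0 * p 2 = p 1 ^ 2) :
    ∃ ℓ : MvPolynomial (Fin 2) ℂ, ℓ ≠ 0 ∧ ℓ.IsHomogeneous 1 ∧ ∀ i, ℓ ∣ p i := by
  have hodd : Odd 3 := by decide
  by_cases h0 : p 0 = 0
  · have h2 : p 2 ≠ 0 := fun h2 => hne <| by
      have h1 : p 1 = 0 := pow_eq_zero_iff two_ne_zero |>.mp (by rw [← heq, h0, zero_mul])
      intro i; fin_cases i <;> assumption
    obtain ⟨ℓ, hℓ0, hℓ, hd2, hd0, hd1⟩ :=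
      (hp 2).exists_linear_dvd_of_mul_eq_sq hodd h2 (by rw [mul_comm, heq])
    exact ⟨ℓ, hℓ0, hℓ, fun i => by fin_cases i <;> assumption⟩
  · obtain ⟨ℓ, hℓ0, hℓ, hd0, hd2, hd1⟩ := (hp 0).exists_linear_dvd_of_mul_eq_sq hodd h0 heq
    exact ⟨ℓ, hℓ0, hℓ, fun i => by fin_cases i <;> assumption⟩
end
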